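/- Let C be a cyclic group of order ℓ^h and M a finitely generated ℤℓ[C]-module that is projective (equivalently, ℤℓ-free with ℚℓ ⊗ M a free summand decomposition according to the characters χ_0, …, χ_h of ℚℓ[C]). Write the character of ℚℓ ⊗ M as Σ n_i χ_i, where χ_0 is the trivial character. Then the order of H²(C, M) (Tate Ĥ⁰) depends only on n_0, and the order of H¹(C, M) depends only on the n_i for i > 0. -/

import Mathlib

/-- Scalar multiplication by a group-ring element, as an additive endomorphism. -/
noncomputable def gSmul (ℓ : ℕ) [Fact (Nat.Prime ℓ)] (C : Type*) [CommGroup C]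
    (M : Type*) [AddCommGroup M] [Module (MonoidAlgebra ℤ_[ℓ] C) M]
    (r : MonoidAlgebra ℤ_[ℓ] C) : M →+ M :=
  AddMonoidHom.mk' (fun m => r • m) (fun a b => smul_add r a b)

/-- The norm map `m ↦ ν • m`, `ν = ∑_{c ∈ C} c`. -/
noncomputable def gNorm (ℓ : ℕ) [Fact (Nat.Prime ℓ)] (C : Type*) [CommGroup C] [Fintype C]
    (M : Type*) [AddCommGroup M] [Module (MonoidAlgebra ℤ_[ℓ] C) M] : M →+ M :=
  gSmul ℓ C M (∑ c : C, MonoidAlgebra.of ℤ_[ℓ] C c)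

/-- The map `m ↦ c • m - m`. -/
noncomputable def gSub (ℓ : ℕ) [Fact (Nat.Prime ℓ)] (C : Type*) [CommGroup C]
    (M : Type*) [AddCommGroup M] [Module (MonoidAlgebra ℤ_[ℓ] C) M] (c : C) : M →+ M :=
  gSmul ℓ C M (MonoidAlgebra.of ℤ_[ℓ] C c - 1)

/-- The subgroup of `C`-invariants. -/
noncomputable def gFixed (ℓ : ℕ) [Fact (Nat.Prime ℓ)] (C : Type*) [CommGroup C]
    (M : Type*) [AddCommGroup M] [Module (MonoidAlgebra ℤ_[ℓ] C) M] : AddSubgroup M :=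
  ⨅ c : C, (gSub ℓ C M c).ker

/-- The order of `Ĥ⁰(C,M) = M^C / ν·M` (Tate `H²` for cyclic `C`). -/
noncomputable def gH0 (ℓ : ℕ) [Fact (Nat.Prime ℓ)] (C : Type*) [CommGroup C] [Fintype C]
    (M : Type*) [AddCommGroup M] [Module (MonoidAlgebra ℤ_[ℓ] C) M] : ℕ :=
  ((gNorm ℓ C M).range).relIndex (gFixed ℓ C M)

/-- The order of `H¹(C,M) = Ker ν / (σ-1)·M`, for a generator `σ` of `C`. -/
noncomputable def gH1 (ℓ : ℕ) [Fact (Nat.Prime ℓ)] (C : Type*) [CommGroup C] [Fintype C]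
    (M : Type*) [AddCommGroup M] [Module (MonoidAlgebra ℤ_[ℓ] C) M] (σ : C) : ℕ :=
  ((gSub ℓ C M σ).range).relIndex ((gNorm ℓ C M).ker)

/-- The standard indecomposable `ℤℓ[C]`-lattice of character `χ_i`:
`ℤℓ[C]/(Φ_{ℓ^i}(σ)) ≅ ℤℓ[ζ_{ℓ^i}]` for a generator `σ` of `C`. -/
noncomputable def gStd (ℓ : ℕ) [Fact (Nat.Prime ℓ)] (C : Type*) [CommGroup C]
    (σ : C) (i : ℕ) : Type _ :=
  MonoidAlgebra ℤ_[ℓ] C ⧸ Ideal.span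
    {Polynomial.aeval (MonoidAlgebra.of ℤ_[ℓ] C σ) (Polynomial.cyclotomic (ℓ ^ i) ℤ_[ℓ])}

noncomputable instance (ℓ : ℕ) [Fact (Nat.Prime ℓ)] (C : Type*) [CommGroup C]
    (σ : C) (i : ℕ) : AddCommGroup (gStd ℓ C σ i) := by unfold gStd; infer_instance

noncomputable instance (ℓ : ℕ) [Fact (Nat.Prime ℓ)] (C : Type*) [CommGroup C]
    (σ : C) (i : ℕ) : Module (MonoidAlgebra ℤ_[ℓ] C) (gStd ℓ C σ i) := by
  unfold gStd; infer_instance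


/-!
Both cohomology groups turn direct products into products of orders, so only the standard
lattices `Lᵢ = ℤℓ[C]/(Φ_{ℓ^i}(σ))` matter. Since `ℤℓ[C] = ℤℓ[X]/(X^{ℓ^h} - 1)` and
`Φ_{ℓ^i} ∣ X^{ℓ^h} - 1`, multiplication by `f(σ)` is injective on `Lᵢ` whenever `f` is
coprime to `Φ_{ℓ^i}` in the factorial ring `ℤℓ[X]`. For `i ≥ 1`, `f = X - 1` is coprime to
`Φ_{ℓ^i}` because `Φ_{ℓ^i}(1) = ℓ`, so `Lᵢ` has no invariants and `Ĥ⁰(Lᵢ) = 0`. For `i = 0`,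
any polynomial representing the norm element takes the value `|C| ≠ 0` at `1`, so it is coprime
to `Φ₁ = X - 1`; hence the norm is injective on `L₀` and `H¹(L₀) = 0`.
-/

open Polynomial

namespace AddSubgroup

theorem relIndex_comap_comap_of_surjective {G G' : Type*} [AddGroup G] [AddGroup G']
    {f : G →+ G'} (hf : Function.Surjective f) (H K : AddSubgroup G') :
    (H.comap f).relIndex (K.comap f) = H.relIndex K := by
  rw [relIndex_comap, map_comap_eq_self_of_surjective hf]

variable {ι : Type*} {G : ι → Type*} [∀ i, AddGroup (G i)]

def piUnivEquiv (K : ∀ i, AddSubgroup (G i)) : pi Set.univ K ≃+ ∀ i, K i where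
  toFun x i := ⟨x.1 i, x.2 i (Set.mem_univ i)⟩
  invFun y := ⟨fun i => y i, fun i _ => (y i).2⟩
  left_inv _ := rfl
  right_inv _ := rfl
  map_add' _ _ := rfl

variable [Fintype ι]

theorem index_pi' (H : ∀ i, AddSubgroup (G i)) :
    (pi Set.univ H).index = ∏ i, (H i).index := by
  simp_rw [index, ← Nat.card_pi]
  refine Nat.card_congr
    ((Quotient.congrRight (fun x y ↦ ?_)).trans (Setoid.piQuotientEquiv _).symm)
  rw [QuotientAddGroup.leftRel_pi]

theorem relIndex_pi (H K : ∀ i, AddSubgroup (G i)) :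
    (pi Set.univ H).relIndex (pi Set.univ K) = ∏ i, (H i).relIndex (K i) := by
  have hsub : (pi Set.univ H).addSubgroupOf (pi Set.univ K) =
      (pi Set.univ fun i => (H i).addSubgroupOf (K i)).comap (piUnivEquiv K).toAddMonoidHom := by
    ext x
    simp [mem_addSubgroupOf, piUnivEquiv, mem_pi]
  rw [relIndex, hsub, index_comap_of_surjective _ (piUnivEquiv K).surjective, index_pi']
  rfl

end AddSubgroup

namespace MonoidAlgebra

variable {R G : Type*} [CommRing R]

theorem aeval_of_surjective [Group G] [Finite G] {σ : G}
    (hσ : ∀ g, g ∈ Subgroup.zpowers σ) : Function.Surjective (aeval (R := R) (of R G σ)) := by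
  intro r
  induction r using MonoidAlgebra.induction_linear with
  | zero => exact ⟨0, map_zero _⟩
  | add f g hf hg =>
    obtain ⟨P, rfl⟩ := hf
    obtain ⟨Q, rfl⟩ := hg
    exact ⟨P + Q, map_add _ _ _⟩
  | single g a =>
    obtain ⟨k, rfl⟩ := mem_powers_iff_mem_zpowers.mpr (hσ g)
    refine ⟨C a * X ^ k, ?_⟩
    rw [single_eq_algebraMap_mul_of, map_mul, aeval_C, map_pow, aeval_X, map_pow]

theorem X_pow_orderOf_sub_one_dvd_of_aeval_eq_zero [Monoid G] {σ : G} (hσ : IsOfFinOrder σ)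
    {Q : R[X]} (hQ : aeval (of R G σ) Q = 0) : X ^ orderOf σ - 1 ∣ Q := by
  nontriviality R
  set N := orderOf σ
  have hN : N ≠ 0 := hσ.orderOf_pos.ne'
  have hmon : (X ^ N - 1 : R[X]).Monic := by simpa using monic_X_pow_sub_C (1 : R) hN
  have hdeg_mod : (X ^ N - 1 : R[X]).natDegree = N := by
    simpa using natDegree_X_pow_sub_C (n := N) (r := (1 : R))
  rw [← modByMonic_eq_zero_iff_dvd hmon]
  set m := Q %ₘ (X ^ N - 1)
  have hm : aeval (of R G σ) m = 0 := by
    rw [aeval_modByMonic_eq_self_of_root (by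
      rw [map_sub, map_pow, aeval_X, ← map_pow, pow_orderOf_eq_one, map_one, map_one, sub_self]),
      hQ]
  have hdeg : m.natDegree < N :=
    hdeg_mod ▸ natDegree_modByMonic_lt Q hmon fun h1 => hN (by simpa [h1] using hdeg_mod.symm)
  have hind : LinearIndependent R (fun k : Fin N => of R G (σ ^ (k : ℕ))) := by
    convert (MonoidAlgebra.basis G R).linearIndependent.comp (fun k : Fin N => σ ^ (k : ℕ))
      fun a b hab => Fin.ext (pow_injOn_Iio_orderOf a.2 b.2 hab) using 1
    funext k
    simp [basis_apply]
  have hsum : ∑ k : Fin N, m.coeff k • of R G (σ ^ (k : ℕ)) = 0 := by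
    rw [Fin.sum_univ_eq_sum_range (fun k => m.coeff k • of R G (σ ^ k)), ← hm,
      aeval_eq_sum_range' hdeg]
    simp [map_pow]
  ext k
  rw [Polynomial.coeff_zero]
  rcases lt_or_ge k N with hk | hk
  · exact Fintype.linearIndependent_iff.mp hind _ hsum ⟨k, hk⟩
  · exact coeff_eq_zero_of_natDegree_lt (hdeg.trans_le hk)

theorem mem_span_aeval_of_aeval_mul_mem [UniqueFactorizationMonoid R] [CommGroup G] [Finite G]
    {σ : G} (hσ : ∀ g, g ∈ Subgroup.zpowers σ) {f g : R[X]}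
    (hg : g ∣ X ^ orderOf σ - 1) (hfg : IsRelPrime g f) {r : R[G]}
    (hr : aeval (of R G σ) f * r ∈ Ideal.span {aeval (of R G σ) g}) :
    r ∈ Ideal.span {aeval (of R G σ) g} := by
  obtain ⟨P, rfl⟩ := aeval_of_surjective hσ r
  obtain ⟨t, ht⟩ := Ideal.mem_span_singleton'.mp hr
  obtain ⟨T, rfl⟩ := aeval_of_surjective hσ t
  have hker : X ^ orderOf σ - 1 ∣ f * P - T * g :=
    X_pow_orderOf_sub_one_dvd_of_aeval_eq_zero (isOfFinOrder_of_finite σ)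
      (by rw [map_sub, map_mul, map_mul, ht, sub_self])
  have hfP : g ∣ f * P := by
    simpa using dvd_add (hg.trans hker) (dvd_mul_left g T)
  obtain ⟨U, rfl⟩ := hfg.dvd_of_dvd_mul_left hfP
  exact Ideal.mem_span_singleton'.mpr ⟨aeval (of R G σ) U, by rw [map_mul, mul_comm]⟩

end MonoidAlgebra

theorem Polynomial.isRelPrime_X_sub_one {R : Type*} [CommRing R] [IsDomain R] {p : R[X]}
    (hp : p.eval 1 ≠ 0) : IsRelPrime (X - 1) p := by
  simpa using (irreducible_X_sub_C (1 : R)).isRelPrime_iff_not_dvd.mpr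
    (by rwa [dvd_iff_isRoot])

section GroupCohomology

variable {ℓ : ℕ} [Fact ℓ.Prime] {C : Type*} [CommGroup C]

@[simp] theorem gSmul_apply {M : Type*} [AddCommGroup M] [Module (MonoidAlgebra ℤ_[ℓ] C) M]
    (r : MonoidAlgebra ℤ_[ℓ] C) (m : M) : gSmul ℓ C M r m = r • m := rfl

section Congr

variable {M N : Type*} [AddCommGroup M] [AddCommGroup N]
  [Module (MonoidAlgebra ℤ_[ℓ] C) M] [Module (MonoidAlgebra ℤ_[ℓ] C) N]

theorem comap_range_gSmul (e : M ≃ₗ[MonoidAlgebra ℤ_[ℓ] C] N) (r : MonoidAlgebra ℤ_[ℓ] C) :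
    (gSmul ℓ C N r).range.comap e.toAddEquiv.toAddMonoidHom = (gSmul ℓ C M r).range := by
  ext m
  simp only [AddSubgroup.mem_comap, AddMonoidHom.mem_range, gSmul_apply]
  exact ⟨fun ⟨y, hy⟩ => ⟨e.symm y, by simpa using congrArg e.symm hy⟩,
    fun ⟨y, hy⟩ => ⟨e y, by simp [← hy]⟩⟩

theorem comap_ker_gSmul (e : M ≃ₗ[MonoidAlgebra ℤ_[ℓ] C] N) (r : MonoidAlgebra ℤ_[ℓ] C) :
    (gSmul ℓ C N r).ker.comap e.toAddEquiv.toAddMonoidHom = (gSmul ℓ C M r).ker := by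
  ext m
  simp [← map_smul]

theorem comap_gFixed (e : M ≃ₗ[MonoidAlgebra ℤ_[ℓ] C] N) :
    (gFixed ℓ C N).comap e.toAddEquiv.toAddMonoidHom = gFixed ℓ C M := by
  simp only [gFixed, gSub, AddSubgroup.comap_iInf, comap_ker_gSmul]

variable [Fintype C]

theorem gH0_congr (e : M ≃ₗ[MonoidAlgebra ℤ_[ℓ] C] N) : gH0 ℓ C M = gH0 ℓ C N := by
  rw [gH0, gH0, gNorm, gNorm, ← comap_range_gSmul e, ← comap_gFixed e,
    AddSubgroup.relIndex_comap_comap_of_surjective e.toAddEquiv.surjective]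

theorem gH1_congr (e : M ≃ₗ[MonoidAlgebra ℤ_[ℓ] C] N) (σ : C) : gH1 ℓ C M σ = gH1 ℓ C N σ := by
  rw [gH1, gH1, gNorm, gNorm, gSub, gSub, ← comap_range_gSmul e, ← comap_ker_gSmul e,
    AddSubgroup.relIndex_comap_comap_of_surjective e.toAddEquiv.surjective]

end Congr

section Pi

variable {ι : Type*} (M : ι → Type*) [∀ j, AddCommGroup (M j)]
  [∀ j, Module (MonoidAlgebra ℤ_[ℓ] C) (M j)]

theorem range_gSmul_pi (r : MonoidAlgebra ℤ_[ℓ] C) :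
    (gSmul ℓ C (∀ j, M j) r).range =
      AddSubgroup.pi Set.univ fun j => (gSmul ℓ C (M j) r).range := by
  ext m
  simp only [AddMonoidHom.mem_range, gSmul_apply, AddSubgroup.mem_pi, Set.mem_univ,
    forall_const]
  refine ⟨fun ⟨y, hy⟩ j => ⟨y j, by rw [← hy]; rfl⟩, fun hm => ?_⟩
  choose y hy using hm
  exact ⟨y, funext hy⟩

theorem ker_gSmul_pi (r : MonoidAlgebra ℤ_[ℓ] C) :
    (gSmul ℓ C (∀ j, M j) r).ker =
      AddSubgroup.pi Set.univ fun j => (gSmul ℓ C (M j) r).ker := by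
  ext m
  simp [funext_iff, AddSubgroup.mem_pi]

theorem gFixed_pi :
    gFixed ℓ C (∀ j, M j) = AddSubgroup.pi Set.univ fun j => gFixed ℓ C (M j) := by
  ext m
  simp only [gFixed, gSub, AddSubgroup.mem_iInf, ker_gSmul_pi, AddSubgroup.mem_pi, Set.mem_univ,
    forall_const]
  exact forall_comm

variable [Fintype ι] [Fintype C]

theorem gH0_pi : gH0 ℓ C (∀ j, M j) = ∏ j, gH0 ℓ C (M j) := by
  rw [gH0, gNorm, range_gSmul_pi, gFixed_pi, AddSubgroup.relIndex_pi]
  rfl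

theorem gH1_pi (σ : C) : gH1 ℓ C (∀ j, M j) σ = ∏ j, gH1 ℓ C (M j) σ := by
  rw [gH1, gNorm, gSub, range_gSmul_pi, ker_gSmul_pi, AddSubgroup.relIndex_pi]
  rfl

end Pi

end GroupCohomology

section StandardLattices

variable {ℓ : ℕ} [Fact ℓ.Prime] {C : Type*} [CommGroup C] [Fintype C] {σ : C}

theorem ker_gSmul_quotient_eq_bot (hσ : ∀ c : C, c ∈ Subgroup.zpowers σ) {f g : ℤ_[ℓ][X]}
    (hg : g ∣ X ^ orderOf σ - 1) (hfg : IsRelPrime g f) :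
    (gSmul ℓ C (MonoidAlgebra ℤ_[ℓ] C ⧸ Ideal.span {aeval (MonoidAlgebra.of ℤ_[ℓ] C σ) g})
      (aeval (MonoidAlgebra.of ℤ_[ℓ] C σ) f)).ker = ⊥ := by
  refine (AddSubgroup.eq_bot_iff_forall _).mpr fun x hx => ?_
  obtain ⟨r, rfl⟩ := Submodule.Quotient.mk_surjective _ x
  rw [AddMonoidHom.mem_ker, gSmul_apply, ← Submodule.Quotient.mk_smul, smul_eq_mul,
    Submodule.Quotient.mk_eq_zero] at hx
  exact (Submodule.Quotient.mk_eq_zero _).mpr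
    (MonoidAlgebra.mem_span_aeval_of_aeval_mul_mem hσ hg hfg hx)

theorem gFixed_gStd_eq_bot {h i : ℕ} (hC : Fintype.card C = ℓ ^ h)
    (hσ : ∀ c : C, c ∈ Subgroup.zpowers σ) (hi : i ≠ 0) (hih : i ≤ h) :
    gFixed ℓ C (gStd ℓ C σ i) = ⊥ := by
  have hΦ : (cyclotomic (ℓ ^ i) ℤ_[ℓ]).eval 1 ≠ 0 := by
    obtain ⟨k, rfl⟩ := Nat.exists_eq_succ_of_ne_zero hi
    rw [eval_one_cyclotomic_prime_pow]
    exact_mod_cast (Fact.out : ℓ.Prime).ne_zero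
  have hσ1 : MonoidAlgebra.of ℤ_[ℓ] C σ - 1 =
      aeval (MonoidAlgebra.of ℤ_[ℓ] C σ) (X - 1 : ℤ_[ℓ][X]) := by
    simp
  have hg : cyclotomic (ℓ ^ i) ℤ_[ℓ] ∣ X ^ orderOf σ - 1 := by
    rw [orderOf_eq_card_of_forall_mem_zpowers hσ, Nat.card_eq_fintype_card, hC]
    exact (cyclotomic.dvd_X_pow_sub_one _ _).trans (dvd_pow_sub_one_of_dvd (pow_dvd_pow ℓ hih))
  refine eq_bot_iff.mpr ((iInf_le _ σ).trans (le_of_eq ?_))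
  rw [gSub, hσ1]
  exact ker_gSmul_quotient_eq_bot hσ hg (isRelPrime_X_sub_one hΦ).symm

theorem ker_gNorm_gStd_zero (hσ : ∀ c : C, c ∈ Subgroup.zpowers σ) :
    (gNorm ℓ C (gStd ℓ C σ 0)).ker = ⊥ := by
  obtain ⟨F, hF⟩ := MonoidAlgebra.aeval_of_surjective (R := ℤ_[ℓ]) hσ
    (∑ c : C, MonoidAlgebra.of ℤ_[ℓ] C c)
  have hF1 : F.eval 1 = Fintype.card C := by
    let ε := MonoidAlgebra.lift ℤ_[ℓ] ℤ_[ℓ] C 1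
    calc F.eval 1 = aeval (ε (MonoidAlgebra.of ℤ_[ℓ] C σ)) F := by simp [ε]
      _ = ε (∑ c : C, MonoidAlgebra.of ℤ_[ℓ] C c) := by rw [aeval_algHom_apply, hF]
      _ = Fintype.card C := by simp [ε]
  have hg : cyclotomic (ℓ ^ 0) ℤ_[ℓ] ∣ X ^ orderOf σ - 1 :=
    (cyclotomic.dvd_X_pow_sub_one _ _).trans (dvd_pow_sub_one_of_dvd (by simp))
  have hfg : IsRelPrime (cyclotomic (ℓ ^ 0) ℤ_[ℓ]) F := by
    rw [pow_zero, cyclotomic_one]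
    exact isRelPrime_X_sub_one (by rw [hF1]; exact_mod_cast Fintype.card_ne_zero)
  rw [gNorm, ← hF]
  exact ker_gSmul_quotient_eq_bot hσ hg hfg

theorem gH0_gStd_of_ne_zero {h i : ℕ} (hC : Fintype.card C = ℓ ^ h)
    (hσ : ∀ c : C, c ∈ Subgroup.zpowers σ) (hi : i ≠ 0) (hih : i ≤ h) :
    gH0 ℓ C (gStd ℓ C σ i) = 1 := by
  rw [gH0, gFixed_gStd_eq_bot hC hσ hi hih, AddSubgroup.relIndex_bot_right]

theorem gH1_gStd_zero (hσ : ∀ c : C, c ∈ Subgroup.zpowers σ) :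
    gH1 ℓ C (gStd ℓ C σ 0) σ = 1 := by
  rw [gH1, ker_gNorm_gStd_zero hσ, AddSubgroup.relIndex_bot_right]

end StandardLattices

section Sigma

variable {ℓ : ℕ} [Fact ℓ.Prime] {C : Type*} [CommGroup C] [Fintype C]
  {ι : Type*} [Fintype ι] (M : ι → Type*) [∀ i, AddCommGroup (M i)]
  [∀ i, Module (MonoidAlgebra ℤ_[ℓ] C) (M i)] (n : ι → ℕ)

theorem gH0_sigma : gH0 ℓ C ((j : Σ i, Fin (n i)) → M j.1) = ∏ i, gH0 ℓ C (M i) ^ n i := by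
  rw [gH0_pi, Fintype.prod_sigma]
  exact Fintype.prod_congr _ _ fun i => Fin.prod_const (n i) (gH0 ℓ C (M i))

theorem gH1_sigma (σ : C) :
    gH1 ℓ C ((j : Σ i, Fin (n i)) → M j.1) σ = ∏ i, gH1 ℓ C (M i) σ ^ n i := by
  rw [gH1_pi, Fintype.prod_sigma]
  exact Fintype.prod_congr _ _ fun i => Fin.prod_const (n i) (gH1 ℓ C (M i) σ)

end Sigma

theorem stmt_7_general (ℓ : ℕ) [Fact (Nat.Prime ℓ)] (h : ℕ)
    (C : Type*) [CommGroup C] [Fintype C]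
    (hC : Fintype.card C = ℓ ^ h) (σ : C) (hσ : ∀ c : C, c ∈ Subgroup.zpowers σ)
    (M M' : Type*) [AddCommGroup M] [AddCommGroup M']
    [Module (MonoidAlgebra ℤ_[ℓ] C) M] [Module (MonoidAlgebra ℤ_[ℓ] C) M']
    (n n' : Fin (h + 1) → ℕ)
    (hM : Nonempty (M ≃ₗ[MonoidAlgebra ℤ_[ℓ] C]
      ((j : Σ i : Fin (h + 1), Fin (n i)) → gStd ℓ C σ (j.1 : ℕ))))
    (hM' : Nonempty (M' ≃ₗ[MonoidAlgebra ℤ_[ℓ] C]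
      ((j : Σ i : Fin (h + 1), Fin (n' i)) → gStd ℓ C σ (j.1 : ℕ)))) :
    (n 0 = n' 0 → gH0 ℓ C M = gH0 ℓ C M') ∧
    ((∀ i : Fin (h + 1), i ≠ 0 → n i = n' i) → gH1 ℓ C M σ = gH1 ℓ C M' σ) := by
  obtain ⟨e⟩ := hM
  obtain ⟨e'⟩ := hM'
  let L : Fin (h + 1) → Type _ := fun i => gStd ℓ C σ i
  rw [gH0_congr e, gH0_congr e', gH1_congr e, gH1_congr e', gH0_sigma L, gH0_sigma L,
    gH1_sigma L, gH1_sigma L]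
  refine ⟨fun h0 => Finset.prod_congr rfl fun i _ => ?_,
    fun h1 => Finset.prod_congr rfl fun i _ => ?_⟩
  · rcases eq_or_ne i 0 with rfl | hi
    · rw [h0]
    · rw [gH0_gStd_of_ne_zero hC hσ (Fin.val_ne_zero_iff.mpr hi) (Fin.is_le i), one_pow, one_pow]
  · rcases eq_or_ne i 0 with rfl | hi
    · rw [show gH1 ℓ C (L 0) σ = 1 from gH1_gStd_zero hσ, one_pow, one_pow]
    · rw [h1 i hi]

/-- for `C` cyclic of order `ℓ^h` and a finitely generated projective
`ℤℓ[C]`-module `M` whose character is `∑ nᵢ χᵢ` (i.e. `M` is a direct sum of `nᵢ` copies of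
the standard lattices `ℤℓ[C]/(Φ_{ℓ^i}(σ))`), the order of `H²(C,M) = Ĥ⁰(C,M)` depends only
on `n₀`, and the order of `H¹(C,M)` depends only on the `nᵢ` for `i > 0`. -/
theorem stmt_7 (ℓ : ℕ) [Fact (Nat.Prime ℓ)] (h : ℕ)
    (C : Type*) [CommGroup C] [Fintype C] [IsCyclic C]
    (hC : Fintype.card C = ℓ ^ h) (σ : C) (hσ : ∀ c : C, c ∈ Subgroup.zpowers σ)
    (M M' : Type*) [AddCommGroup M] [AddCommGroup M']
    [Module (MonoidAlgebra ℤ_[ℓ] C) M] [Module (MonoidAlgebra ℤ_[ℓ] C) M']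
    (n n' : Fin (h + 1) → ℕ)
    (hM : Nonempty (M ≃ₗ[MonoidAlgebra ℤ_[ℓ] C]
      ((j : Σ i : Fin (h + 1), Fin (n i)) → gStd ℓ C σ (j.1 : ℕ))))
    (hM' : Nonempty (M' ≃ₗ[MonoidAlgebra ℤ_[ℓ] C]
      ((j : Σ i : Fin (h + 1), Fin (n' i)) → gStd ℓ C σ (j.1 : ℕ)))) :
    (n 0 = n' 0 → gH0 ℓ C M = gH0 ℓ C M') ∧
    ((∀ i : Fin (h + 1), i ≠ 0 → n i = n' i) → gH1 ℓ C M σ = gH1 ℓ C M' σ) :=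
  stmt_7_general ℓ h C hC σ hσ M M' n n' hM hM'
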